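/- arXiv:2201.10337 — 3 statements merged into one kernel-verified Lean document; each statement's English description precedes it below -/
import Mathlib

section
/- If p is a real polynomial such that |p(s)| ≤ (1+s)^N / s for all s > 0 (where N is a positive integer), then |p(0)| ≤ e² N². -/
/-!
Interpolate `p`, whose degree is less than `N` by the growth bound, at the `N` nodes
`(a / N)²`, `1 ≤ a ≤ N`. The absolute Lagrange weight of the node `(a / N)²` at `0` is
`2 (N!)² / ((N - a)! (N + a)!) ≤ 2 exp (-2a² / (2N + 1))`, while the bound on `|p|` at that node is
at most `(N / a)² exp (a² / N)`. The two exponentials nearly cancel, so the node contributes at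
most `2 √e N² / a²`, and `∑ 1 / a² ≤ 2` gives `|p(0)| ≤ 4 √e N² ≤ e² N²`.
-/

open Finset Polynomial Real Filter
open scoped Nat

theorem Lagrange.eval_basis {K ι : Type*} [Field K] [DecidableEq ι] (s : Finset ι) (v : ι → K)
    (i : ι) (x : K) :
    (Lagrange.basis s v i).eval x = ∏ j ∈ s.erase i, (x - v j) / (v i - v j) := by
  simp only [Lagrange.basis, Lagrange.basisDivisor, eval_prod, eval_mul, eval_C, eval_sub, eval_X]
  exact prod_congr rfl fun j _ => by ring

theorem Lagrange.abs_eval_le_sum {K ι : Type*} [Field K] [LinearOrder K] [IsStrictOrderedRing K]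
    [DecidableEq ι] {s : Finset ι} {v : ι → K} (hvs : Set.InjOn v s) {f : K[X]}
    (hf : f.degree < #s) (x : K) :
    |f.eval x| ≤ ∑ i ∈ s, |f.eval (v i)| * ∏ j ∈ s.erase i, |x - v j| / |v i - v j| := by
  conv_lhs => rw [eq_interpolate hvs hf, interpolate_apply, eval_finsetSum]
  refine (abs_sum_le_sum_abs _ _).trans_eq (sum_congr rfl fun i _ => ?_)
  simp only [eval_mul, eval_C, abs_mul, eval_basis, abs_prod, abs_div]

theorem Polynomial.degree_le_of_abs_eval_le {p : ℝ[X]} {C : ℝ} {n : ℕ}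
    (h : ∀ᶠ s in atTop, |p.eval s| ≤ C * s ^ n) : p.degree ≤ n := by
  by_contra! hlt
  have hdiv := abs_div_tendsto_atTop_atTop_of_degree_gt p (X ^ n) (by rwa [degree_X_pow])
    (pow_ne_zero n X_ne_zero)
  obtain ⟨s, hs, hbound, hpos⟩ :=
    ((hdiv.eventually_gt_atTop C).and (h.and (eventually_gt_atTop 0))).exists
  rw [eval_pow, eval_X, abs_div, abs_of_pos (by positivity : 0 < s ^ n),
    lt_div_iff₀ (by positivity)] at hs
  linarith

theorem Polynomial.degree_lt_of_abs_eval_le_one_add_pow_div {p : ℝ[X]} {n : ℕ}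
    (h : ∀ s : ℝ, 0 < s → |p.eval s| ≤ (1 + s) ^ n / s) : p.degree < n := by
  have hmulX : (p * X).degree ≤ (n : WithBot ℕ) := by
    refine degree_le_of_abs_eval_le (C := 2 ^ n) ((eventually_ge_atTop 1).mono fun s hs => ?_)
    have hs₀ : 0 < s := by linarith
    calc |(p * X).eval s| = |p.eval s| * s := by rw [eval_mul_X, abs_mul, abs_of_pos hs₀]
      _ ≤ (1 + s) ^ n := (le_div_iff₀ hs₀).1 (h s hs₀)
      _ ≤ (2 * s) ^ n := by gcongr; linarith
      _ = 2 ^ n * s ^ n := mul_pow 2 s n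
  rcases eq_or_ne p 0 with rfl | hp
  · simp
  · exact (degree_lt_degree_mul_X hp).trans_le hmulX

theorem Real.two_mul_le_log_one_add_sub_log_one_sub {x : ℝ} (hx₀ : 0 ≤ x) (hx₁ : x < 1) :
    2 * x ≤ log (1 + x) - log (1 - x) := by
  have h := hasSum_log_sub_log_of_abs_lt_one (abs_lt.2 ⟨by linarith, hx₁⟩)
  simpa using le_hasSum h 0 fun k _ => by positivity

theorem Real.one_sub_div_one_add_le_exp {x : ℝ} (hx₀ : 0 ≤ x) (hx₁ : x < 1) :
    (1 - x) / (1 + x) ≤ exp (-(2 * x)) := by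
  have := two_mul_le_log_one_add_sub_log_one_sub hx₀ hx₁
  rw [← exp_log (by linarith : 0 < 1 - x), ← exp_log (by linarith : 0 < 1 + x), ← exp_sub]
  exact exp_le_exp.2 (by linarith)

theorem Nat.factorial_sq_div_le_exp {n a : ℕ} (ha : a ≤ n) :
    (n ! : ℝ) ^ 2 / ((n - a)! * (n + a)!) ≤ exp (-(2 * a ^ 2 / (2 * n + 1))) := by
  induction a with
  | zero => simpa [sq] using div_self_le_one _
  | succ a ih =>
    have han : (a : ℝ) + 1 ≤ n := by exact_mod_cast ha
    set x : ℝ := (2 * a + 1) / (2 * n + 1) with hx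
    have hx₁ : x < 1 := (div_lt_one (by positivity)).2 (by linarith)
    have hratio : (n ! : ℝ) ^ 2 / ((n - (a + 1))! * (n + (a + 1))!) =
        (n ! : ℝ) ^ 2 / ((n - a)! * (n + a)!) * ((1 - x) / (1 + x)) := by
      have hsub : (n - a)! = (n - a) * (n - (a + 1))! := by
        rw [← Nat.mul_factorial_pred (by omega)]; congr 2
      rw [hsub, ← add_assoc, factorial_succ]
      have hna : (n : ℝ) - a ≠ 0 := by linarith
      push_cast [Nat.cast_sub (by omega : a ≤ n), hx]
      field_simp
      ring
    rw [hratio]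
    calc _ ≤ exp (-(2 * a ^ 2 / (2 * n + 1))) * exp (-(2 * x)) :=
          mul_le_mul (ih (by omega)) (one_sub_div_one_add_le_exp (by positivity) hx₁)
            (div_nonneg (by linarith) (by positivity)) (exp_nonneg _)
      _ = exp (-(2 * ((a + 1 : ℕ) : ℝ) ^ 2 / (2 * n + 1))) := by
          rw [← exp_add, hx]; push_cast; ring_nf

theorem one_add_sq_div_pow_mul_factorial_sq_div_le {n a : ℕ} (ha : a ≤ n) :
    (1 + ((a : ℝ) / n) ^ 2) ^ n * ((n ! : ℝ) ^ 2 / ((n - a)! * (n + a)!)) ≤ exp (1 / 2) := by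
  obtain rfl | hn := Nat.eq_zero_or_pos n
  · obtain rfl := Nat.le_zero.1 ha
    simp
  have han : (a : ℝ) ≤ n := by exact_mod_cast ha
  have hn : (0 : ℝ) < n := by exact_mod_cast hn
  have hpow : (1 + ((a : ℝ) / n) ^ 2) ^ n ≤ exp (a ^ 2 / n) := by
    calc (1 + ((a : ℝ) / n) ^ 2) ^ n ≤ exp (((a : ℝ) / n) ^ 2) ^ n := by
          gcongr; linarith [add_one_le_exp (((a : ℝ) / n) ^ 2)]
      _ = exp (a ^ 2 / n) := by
          rw [← exp_nat_mul]; congr 1; field_simp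
  have hexp : (a : ℝ) ^ 2 / n - 2 * a ^ 2 / (2 * n + 1) ≤ 1 / 2 := by
    rw [div_sub_div _ _ hn.ne' (by positivity), div_le_iff₀ (by positivity)]
    nlinarith
  calc _ ≤ exp (a ^ 2 / n) * exp (-(2 * a ^ 2 / (2 * n + 1))) :=
        mul_le_mul hpow (Nat.factorial_sq_div_le_exp ha) (by positivity) (exp_nonneg _)
    _ ≤ exp (1 / 2) := by rw [← exp_add]; exact exp_le_exp.2 (by linarith)

theorem Finset.prod_Icc_one_id_eq_factorial (n : ℕ) : ∏ x ∈ Icc 1 n, x = n ! := by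
  rw [← Ico_add_one_right_eq_Icc, prod_Ico_id_eq_factorial]

theorem Nat.cast_dist {R : Type*} [Ring R] [LinearOrder R] [IsStrictOrderedRing R] (a b : ℕ) :
    (a.dist b : R) = |(a : R) - b| := by
  rcases le_total a b with h | h
  · rw [dist_eq_sub_of_le h, Nat.cast_sub h, abs_sub_comm, abs_of_nonneg (by simpa using h)]
  · rw [dist_eq_sub_of_le_right h, Nat.cast_sub h, abs_of_nonneg (by simpa using h)]

theorem Nat.prod_erase_Icc_dist {a n : ℕ} (ha : a ∈ Icc 1 n) :
    ∏ b ∈ (Icc 1 n).erase a, a.dist b = (a - 1)! * (n - a)! := by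
  rw [mem_Icc] at ha
  have hsplit : (Icc 1 n).erase a = Ico 1 a ∪ Ioc a n := by
    ext b; simp only [mem_erase, mem_Icc, mem_union, mem_Ico, mem_Ioc]; omega
  rw [hsplit, prod_union (disjoint_left.2 fun b hb hb' => by
    simp only [mem_Ico, mem_Ioc] at hb hb'; omega), ← prod_Icc_one_id_eq_factorial,
    ← prod_Icc_one_id_eq_factorial]
  congr 1
  · refine prod_nbij' (a - ·) (a - ·) ?_ ?_ ?_ ?_ ?_ <;> intro b hb <;>
      simp only [mem_Ico, mem_Icc] at hb ⊢ <;>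
      first | omega | exact dist_eq_sub_of_le_right (by omega)
  · refine prod_nbij' (· - a) (· + a) ?_ ?_ ?_ ?_ ?_ <;> intro b hb <;>
      simp only [mem_Ioc, mem_Icc] at hb ⊢ <;>
      first | omega | exact dist_eq_sub_of_le (by omega)

theorem Nat.factorial_mul_prod_erase_Icc_add {a n : ℕ} (ha : a ∈ Icc 1 n) :
    a ! * ((a + a) * ∏ b ∈ (Icc 1 n).erase a, (a + b)) = (a + n)! := by
  rw [mul_prod_erase _ (a + ·) ha, ← factorial_mul_ascFactorial, ascFactorial_eq_prod_range,
    range_eq_Ico, ← Ico_add_one_right_eq_Icc, ← prod_Ico_add' (a + ·) 0 n 1]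
  simp only [add_assoc, add_comm 1]

noncomputable def sqNode (n a : ℕ) : ℝ := ((a : ℝ) / n) ^ 2

theorem sqNode_pos {n a : ℕ} (ha : a ∈ Icc 1 n) : 0 < sqNode n a := by
  have := mem_Icc.1 ha
  unfold sqNode
  exact pow_pos (div_pos (by norm_cast; omega) (by norm_cast; omega)) 2

theorem sqNode_injOn (n : ℕ) : Set.InjOn (sqNode n) (Icc 1 n) := by
  intro a ha b hb hab
  have hn : (n : ℝ) ≠ 0 := by have := mem_Icc.1 (mem_coe.1 ha); norm_cast; omega
  unfold sqNode at hab
  rw [sq_eq_sq₀ (by positivity) (by positivity), div_left_inj' hn] at hab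
  exact_mod_cast hab

theorem prod_erase_Icc_abs_sqNode {a n : ℕ} (ha : a ∈ Icc 1 n) :
    ∏ b ∈ (Icc 1 n).erase a, |0 - sqNode n b| / |sqNode n a - sqNode n b| =
      2 * ((n ! : ℝ) ^ 2 / ((n - a)! * (n + a)!)) := by
  have ha' := mem_Icc.1 ha
  have hn : (n : ℝ) ≠ 0 := by norm_cast; omega
  have hfactor : ∀ b ∈ (Icc 1 n).erase a, |0 - sqNode n b| / |sqNode n a - sqNode n b| =
      (b : ℝ) ^ 2 / (a.dist b * (a + b : ℕ)) := by
    intro b _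
    rw [sqNode, sqNode, Nat.cast_dist, zero_sub, abs_neg, abs_of_nonneg (by positivity), div_pow,
      div_pow, ← sub_div, abs_div, abs_of_pos (by positivity : (0 : ℝ) < n ^ 2),
      div_div_div_cancel_right₀ (by positivity), sq_sub_sq, abs_mul,
      abs_of_nonneg (by positivity : (0 : ℝ) ≤ a + b)]
    push_cast; ring
  have hprod : a * ∏ b ∈ (Icc 1 n).erase a, b = n ! :=
    (mul_prod_erase _ (fun b => b) ha).trans (prod_Icc_one_id_eq_factorial n)
  have hadd := Nat.factorial_mul_prod_erase_Icc_add ha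
  rw [← Nat.mul_factorial_pred (by omega : a ≠ 0), add_comm a n] at hadd
  rw [prod_congr rfl hfactor, prod_div_distrib, prod_mul_distrib, prod_pow]
  simp only [← Nat.cast_prod, ← hprod, Nat.prod_erase_Icc_dist ha, ← hadd]
  have : (a : ℝ) ≠ 0 := by norm_cast; omega
  push_cast
  field_simp
  ring

theorem pow_div_sqNode_mul_prod_erase_Icc_le {a n : ℕ} (ha : a ∈ Icc 1 n) :
    (1 + sqNode n a) ^ n / sqNode n a *
        ∏ b ∈ (Icc 1 n).erase a, |0 - sqNode n b| / |sqNode n a - sqNode n b| ≤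
      2 * exp (1 / 2) * n ^ 2 * ((a : ℝ) ^ 2)⁻¹ := by
  have ha' := mem_Icc.1 ha
  have hn : (n : ℝ) ≠ 0 := by norm_cast; omega
  have hna : (a : ℝ) ≠ 0 := by norm_cast; omega
  rw [prod_erase_Icc_abs_sqNode ha]
  calc _ = 2 * n ^ 2 * ((a : ℝ) ^ 2)⁻¹ *
        ((1 + ((a : ℝ) / n) ^ 2) ^ n * ((n ! : ℝ) ^ 2 / ((n - a)! * (n + a)!))) := by
        unfold sqNode; field_simp
    _ ≤ 2 * n ^ 2 * ((a : ℝ) ^ 2)⁻¹ * exp (1 / 2) := by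
        gcongr; exact one_add_sq_div_pow_mul_factorial_sq_div_le ha'.2
    _ = _ := by ring

theorem sum_Icc_inv_sq_le_two (n : ℕ) : ∑ a ∈ Icc 1 n, ((a : ℝ) ^ 2)⁻¹ ≤ 2 := by
  have h := sum_Ioo_inv_sq_le (α := ℝ) 0 (n + 1)
  rw [Ioo_add_one_right_eq_Ioc, ← Icc_add_one_left_eq_Ioc] at h
  simpa using h

theorem Real.four_mul_exp_half_le_exp_one_sq : 4 * exp (1 / 2) ≤ exp 1 ^ 2 := by
  have hsplit : exp 1 ^ 2 = exp (1 / 2) * (exp (1 / 2) * exp 1) := by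
    rw [← exp_add, ← exp_add, sq, ← exp_add]; norm_num
  have h₁ := add_one_le_exp (1 / 2 : ℝ)
  have h₂ := exp_one_gt_d9
  rw [hsplit, mul_comm 4]
  gcongr
  nlinarith

theorem polynomial_value_at_zero_bound_general (p : Polynomial ℝ) (N : ℕ)
    (h : ∀ s : ℝ, 0 < s → |p.eval s| ≤ (1 + s) ^ N / s) :
    |p.eval 0| ≤ Real.exp 1 ^ 2 * (N : ℝ) ^ 2 := by
  have hdeg : p.degree < #(Icc 1 N) := by
    rw [Nat.card_Icc, add_tsub_cancel_right]
    exact degree_lt_of_abs_eval_le_one_add_pow_div h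
  calc |p.eval 0|
      ≤ ∑ a ∈ Icc 1 N, |p.eval (sqNode N a)| *
          ∏ b ∈ (Icc 1 N).erase a, |0 - sqNode N b| / |sqNode N a - sqNode N b| :=
        Lagrange.abs_eval_le_sum (sqNode_injOn N) hdeg 0
    _ ≤ ∑ a ∈ Icc 1 N, 2 * exp (1 / 2) * N ^ 2 * ((a : ℝ) ^ 2)⁻¹ := by
        refine sum_le_sum fun a ha => le_trans ?_ (pow_div_sqNode_mul_prod_erase_Icc_le ha)
        gcongr
        exact h _ (sqNode_pos ha)
    _ ≤ 2 * exp (1 / 2) * N ^ 2 * 2 := by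
        rw [← mul_sum]; gcongr; exact sum_Icc_inv_sq_le_two N
    _ ≤ exp 1 ^ 2 * N ^ 2 := by
        nlinarith [four_mul_exp_half_le_exp_one_sq, sq_nonneg (N : ℝ)]

/-- If a real polynomial `p` satisfies `|p(s)| ≤ (1+s)^N / s` for all `s > 0`,
where `N` is a positive integer, then `|p(0)| ≤ e² N²`. -/
theorem polynomial_value_at_zero_bound (p : Polynomial ℝ) (N : ℕ) (hN : 0 < N)
    (h : ∀ s : ℝ, 0 < s → |p.eval s| ≤ (1 + s) ^ N / s) :
    |p.eval 0| ≤ Real.exp 1 ^ 2 * (N : ℝ) ^ 2 :=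
  polynomial_value_at_zero_bound_general p N h
end

section
/- Let A be a positive semidefinite symmetric d×d real matrix, let ρ_A(x) = |A^{1/2} x|_{ℝ^d} for x ∈ ℝ^d, and for a set Ω ⊆ ℝ^d let ρ_A(Ω) = sup_{x∈Ω} ρ_A(x). Then for every integrable f : I → ℝ^d on an interval I, d^{-1} ⟨ρ_A(f)⟩_I ≤ ρ_A(⟪f⟫_I) ≤ ⟨ρ_A(f)⟩_I, where ⟨ρ_A(f)⟩_I = |I|^{-1} ∫_I |A^{1/2} f(y)|_{ℝ^d} dy. -/
open MeasureTheory Set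
open scoped ENNReal Matrix Pointwise Classical

noncomputable section

/-- The unit interval `I₀ = [0,1)`. -/
def I0 : Set ℝ := Set.Ico (0 : ℝ) 1

/-- The dyadic interval `[k/2^n, (k+1)/2^n)`. -/
def dyad (n k : ℕ) : Set ℝ := Set.Ico ((k : ℝ) / 2 ^ n) (((k : ℝ) + 1) / 2 ^ n)

/-- Real `d × d` matrices. -/
abbrev Mat (d : ℕ) := Matrix (Fin d) (Fin d) ℝ

/-- The Euclidean norm `|v|_{ℝ^d}`. -/
def enorm2 {d : ℕ} (v : Fin d → ℝ) : ℝ := Real.sqrt (∑ i, v i ^ 2)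

/-- The Euclidean inner product `⟨v, w⟩_{ℝ^d}`. -/
def dotp {d : ℕ} (v w : Fin d → ℝ) : ℝ := ∑ i, v i * w i

open scoped Classical in
/-- The positive semidefinite square root of a positive semidefinite matrix
(junk value `0` if the matrix is not positive semidefinite). -/
def matSqrt {d : ℕ} (A : Mat d) : Mat d := if h : A.PosSemidef then
  (h.1.eigenvectorUnitary : Mat d) * Matrix.diagonal ((↑) ∘ (Real.sqrt ∘ h.1.eigenvalues)) *
    (star h.1.eigenvectorUnitary : Mat d) else 0

/-- Order in the sense of quadratic forms: `A ⩽ B` iff `B - A` is positive semidefinite. -/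
def matLE {d : ℕ} (A B : Mat d) : Prop := (B - A).PosSemidef

/-- The average `⟨g⟩_I = |I|⁻¹ ∫_I g` of a (scalar- or vector-valued) function. -/
def avgOn {E : Type*} [NormedAddCommGroup E] [NormedSpace ℝ E] (I : Set ℝ) (g : ℝ → E) : E :=
  (volume I).toReal⁻¹ • ∫ x in I, g x

/-- The entrywise average `⟨W⟩_I` of a matrix-valued function. -/
def avgMat {d : ℕ} (I : Set ℝ) (W : ℝ → Mat d) : Mat d :=
  Matrix.of fun i j => avgOn I fun x => W x i j

/-- A matrix weight on `I₀`: an integrable function with symmetric values,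
positive definite a.e. on `I₀`. -/
structure IsMatrixWeight (d : ℕ) (W : ℝ → Mat d) : Prop where
  intOn : ∀ i j, IntegrableOn (fun x => W x i j) I0
  symm : ∀ x, (W x).IsSymm
  posdef : ∀ᵐ x ∂(volume.restrict I0), (W x).PosDef

/-- Membership in `L²_W(ℝ^d)`. -/
def MemL2W {d : ℕ} (W : ℝ → Mat d) (f : ℝ → Fin d → ℝ) : Prop :=
  Measurable f ∧ IntegrableOn (fun x => dotp (W x *ᵥ f x) (f x)) I0

/-- The squared norm `‖f‖²_{L²_W} = ∫_{I₀} ⟨W(x) f(x), f(x)⟩ dx`. -/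
def l2normSq {d : ℕ} (W : ℝ → Mat d) (f : ℝ → Fin d → ℝ) : ℝ :=
  ∫ x in I0, dotp (W x *ᵥ f x) (f x)

/-- The average `⟨φ W f⟩_I = |I|⁻¹ ∫_I φ(y) W(y) f(y) dy`. -/
def avgPhiWf {d : ℕ} (I : Set ℝ) (φ : ℝ → ℝ) (W : ℝ → Mat d) (f : ℝ → Fin d → ℝ) :
    Fin d → ℝ :=
  avgOn I fun y => φ y • (W y *ᵥ f y)

/-- Admissible functions `φ : I → [-1,1]`, measurable. -/
def Adm (I : Set ℝ) (φ : ℝ → ℝ) : Prop :=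
  Measurable φ ∧ ∀ y ∈ I, φ y ∈ Set.Icc (-1 : ℝ) 1

/-- The convex body average `⟪f⟫_I = { ⟨φ f⟩_I : φ : I → [-1,1] measurable }`. -/
def cbAvg {d : ℕ} (I : Set ℝ) (f : ℝ → Fin d → ℝ) : Set (Fin d → ℝ) :=
  {v | ∃ φ : ℝ → ℝ, Adm I φ ∧ v = avgOn I fun y => φ y • f y}

/-! The upper bound is the triangle inequality for the Bochner integral, since `|φ| ≤ 1`.
For the lower bound, taking `φ` to be the sign of the `i`-th coordinate of `B f` (with
`B = A^{1/2}`) produces a point `v ∈ ⟪f⟫_I` with `(B v)_i = ⟨|(B f)_i|⟩_I`; summing over the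
`d` coordinates and using `|x| ≤ ∑ |x_i|` costs the factor `d`. -/

section avgOn

variable {E F : Type*} [NormedAddCommGroup E] [NormedSpace ℝ E]
  [NormedAddCommGroup F] [NormedSpace ℝ F] {I : Set ℝ}

theorem ContinuousLinearMap.avgOn_comp_comm [CompleteSpace E] [CompleteSpace F]
    (L : E →L[ℝ] F) {g : ℝ → E} (hg : IntegrableOn g I) :
    avgOn I (fun y => L (g y)) = L (avgOn I g) := by
  rw [avgOn, avgOn, map_smul, L.integral_comp_comm hg]

theorem avgOn_nonneg (hI : MeasurableSet I) {g : ℝ → ℝ} (hg : ∀ y ∈ I, 0 ≤ g y) :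
    0 ≤ avgOn I g :=
  smul_nonneg (inv_nonneg.2 ENNReal.toReal_nonneg) (setIntegral_nonneg hI hg)

theorem avgOn_mono (hI : MeasurableSet I) {g h : ℝ → ℝ} (hg : IntegrableOn g I)
    (hh : IntegrableOn h I) (hgh : ∀ y ∈ I, g y ≤ h y) : avgOn I g ≤ avgOn I h :=
  smul_le_smul_of_nonneg_left (setIntegral_mono_on hg hh hI hgh)
    (inv_nonneg.2 ENNReal.toReal_nonneg)

theorem avgOn_finset_sum {ι : Type*} (s : Finset ι) {g : ι → ℝ → E}
    (hg : ∀ i ∈ s, IntegrableOn (g i) I) :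
    avgOn I (fun y => ∑ i ∈ s, g i y) = ∑ i ∈ s, avgOn I (g i) := by
  rw [avgOn, integral_finsetSum s hg, Finset.smul_sum]
  rfl

end avgOn

namespace Adm

variable {E : Type*} [NormedAddCommGroup E] [NormedSpace ℝ E] {I : Set ℝ} {φ : ℝ → ℝ}

theorem abs_le_one (hφ : Adm I φ) {y : ℝ} (hy : y ∈ I) : |φ y| ≤ 1 :=
  abs_le.2 (hφ.2 y hy)

theorem integrableOn_smul (hφ : Adm I φ) (hI : MeasurableSet I) {g : ℝ → E}
    (hg : IntegrableOn g I) : IntegrableOn (fun y => φ y • g y) I :=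
  hg.bdd_smul 1 hφ.1.aestronglyMeasurable
    ((ae_restrict_iff' hI).2 (Filter.Eventually.of_forall fun _ hy => hφ.abs_le_one hy))

theorem norm_avgOn_smul_le (hφ : Adm I φ) (hI : MeasurableSet I) {g : ℝ → E}
    (hg : IntegrableOn g I) : ‖avgOn I (fun y => φ y • g y)‖ ≤ avgOn I (fun y => ‖g y‖) := by
  rw [avgOn, avgOn, norm_smul, Real.norm_of_nonneg (inv_nonneg.2 ENNReal.toReal_nonneg)]
  refine mul_le_mul_of_nonneg_left (norm_integral_le_of_norm_le hg.norm ?_)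
    (inv_nonneg.2 ENNReal.toReal_nonneg)
  refine (ae_restrict_iff' hI).2 (Filter.Eventually.of_forall fun y hy => ?_)
  rw [norm_smul, Real.norm_eq_abs]
  exact mul_le_of_le_one_left (norm_nonneg _) (hφ.abs_le_one hy)

end Adm

theorem exists_adm_avgOn_mul_eq_avgOn_abs {I : Set ℝ} {g : ℝ → ℝ}
    (hg : AEStronglyMeasurable g (volume.restrict I)) :
    ∃ φ, Adm I φ ∧ avgOn I (fun y => φ y * g y) = avgOn I (fun y => |g y|) := by
  set φ : ℝ → ℝ := fun y => if 0 ≤ hg.mk g y then 1 else -1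
  have hφ : Adm I φ := by
    refine ⟨Measurable.ite (measurableSet_le measurable_const hg.measurable_mk)
      measurable_const measurable_const, fun y _ => ?_⟩
    by_cases h : 0 ≤ hg.mk g y <;> simp [φ, h]
  refine ⟨φ, hφ, congrArg (_ • ·) (integral_congr_ae ?_)⟩
  filter_upwards [hg.ae_eq_mk] with y hy
  by_cases h : 0 ≤ hg.mk g y
  · simp [φ, h, hy, abs_of_nonneg h]
  · simp [φ, h, hy, abs_of_neg (not_le.1 h)]

section enorm2

variable {d : ℕ}

theorem enorm2_eq_norm_equiv_symm (v : Fin d → ℝ) :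
    enorm2 v = ‖(EuclideanSpace.equiv (Fin d) ℝ).symm v‖ := by
  simp [EuclideanSpace.norm_eq, enorm2]

theorem abs_apply_le_enorm2 (v : Fin d → ℝ) (i : Fin d) : |v i| ≤ enorm2 v := by
  rw [← Real.sqrt_sq_eq_abs]
  exact Real.sqrt_le_sqrt (Finset.single_le_sum (f := fun j => v j ^ 2)
    (fun j _ => sq_nonneg _) (Finset.mem_univ i))

theorem enorm2_le_sum_abs (v : Fin d → ℝ) : enorm2 v ≤ ∑ i, |v i| := by
  calc enorm2 v = Real.sqrt (∑ i, |v i| ^ 2) := by simp [enorm2, sq_abs]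
  _ ≤ Real.sqrt ((∑ i, |v i|) ^ 2) :=
      Real.sqrt_le_sqrt (Finset.sum_sq_le_sq_sum_of_nonneg (fun i _ => abs_nonneg _))
  _ = ∑ i, |v i| := Real.sqrt_sq (Finset.sum_nonneg fun i _ => abs_nonneg _)

theorem MeasureTheory.IntegrableOn.enorm2 {I : Set ℝ} {g : ℝ → Fin d → ℝ}
    (hg : IntegrableOn g I) : IntegrableOn (fun y => enorm2 (g y)) I := by
  simp only [enorm2_eq_norm_equiv_symm]
  exact ((EuclideanSpace.equiv (Fin d) ℝ).symm.toContinuousLinearMap.integrable_comp hg).norm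

theorem avgOn_enorm2_le_sum_avgOn_abs {I : Set ℝ} (hI : MeasurableSet I) {g : ℝ → Fin d → ℝ}
    (hg : IntegrableOn g I) :
    avgOn I (fun y => enorm2 (g y)) ≤ ∑ i, avgOn I (fun y => |g y i|) := by
  have hgi : ∀ i ∈ Finset.univ, IntegrableOn (fun y => |g y i|) I :=
    fun i _ => (hg.eval i).abs
  rw [← avgOn_finset_sum _ hgi]
  exact avgOn_mono hI hg.enorm2 (integrable_finsetSum _ hgi) fun y _ => enorm2_le_sum_abs _

theorem Adm.enorm2_avgOn_smul_le {I : Set ℝ} {φ : ℝ → ℝ} (hφ : Adm I φ) (hI : MeasurableSet I)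
    {g : ℝ → Fin d → ℝ} (hg : IntegrableOn g I) :
    enorm2 (avgOn I (fun y => φ y • g y)) ≤ avgOn I (fun y => enorm2 (g y)) := by
  let T := (EuclideanSpace.equiv (Fin d) ℝ).symm.toContinuousLinearMap
  have hTg : IntegrableOn (fun y => T (g y)) I := T.integrable_comp hg
  simp only [enorm2_eq_norm_equiv_symm]
  rw [← ContinuousLinearEquiv.coe_coe, ← T.avgOn_comp_comm (hφ.integrableOn_smul hI hg)]
  simpa only [map_smul] using hφ.norm_avgOn_smul_le hI hTg

end enorm2

section mulVec

variable {d : ℕ} {I : Set ℝ} {f : ℝ → Fin d → ℝ}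

theorem Matrix.integrableOn_mulVec (B : Mat d) (hf : IntegrableOn f I) :
    IntegrableOn (fun y => B *ᵥ f y) I :=
  (LinearMap.toContinuousLinearMap B.mulVecLin).integrable_comp hf

theorem Matrix.avgOn_mulVec (B : Mat d) (hf : IntegrableOn f I) :
    avgOn I (fun y => B *ᵥ f y) = B *ᵥ avgOn I f :=
  (LinearMap.toContinuousLinearMap B.mulVecLin).avgOn_comp_comm hf

theorem enorm2_mulVec_le_avgOn_of_mem_cbAvg (B : Mat d) (hI : MeasurableSet I)
    (hf : IntegrableOn f I) {v : Fin d → ℝ} (hv : v ∈ cbAvg I f) :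
    enorm2 (B *ᵥ v) ≤ avgOn I (fun y => enorm2 (B *ᵥ f y)) := by
  obtain ⟨φ, hφ, rfl⟩ := hv
  rw [← B.avgOn_mulVec (hφ.integrableOn_smul hI hf)]
  simpa only [Matrix.mulVec_smul] using hφ.enorm2_avgOn_smul_le hI (B.integrableOn_mulVec hf)

theorem exists_mem_cbAvg_avgOn_abs_le (B : Mat d) (hI : MeasurableSet I)
    (hf : IntegrableOn f I) (i : Fin d) :
    ∃ v ∈ cbAvg I f, avgOn I (fun y => |(B *ᵥ f y) i|) ≤ enorm2 (B *ᵥ v) := by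
  let L : (Fin d → ℝ) →L[ℝ] ℝ :=
    (ContinuousLinearMap.proj i).comp (LinearMap.toContinuousLinearMap B.mulVecLin)
  have hLf : IntegrableOn (fun y => L (f y)) I := L.integrable_comp hf
  obtain ⟨φ, hφ, hφL⟩ := exists_adm_avgOn_mul_eq_avgOn_abs hLf.aestronglyMeasurable
  refine ⟨_, ⟨φ, hφ, rfl⟩, ?_⟩
  calc avgOn I (fun y => |L (f y)|) = avgOn I (fun y => φ y * L (f y)) := hφL.symm
    _ = L (avgOn I fun y => φ y • f y) := by
      simp_rw [← smul_eq_mul, ← map_smul]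
      exact L.avgOn_comp_comm (hφ.integrableOn_smul hI hf)
    _ ≤ enorm2 (B *ᵥ avgOn I fun y => φ y • f y) :=
      (le_abs_self _).trans (abs_apply_le_enorm2 (B *ᵥ _) i)

theorem cbAvg_enorm2_mulVec_comparable (B : Mat d) (hI : MeasurableSet I)
    (hf : IntegrableOn f I) :
    (d : ℝ)⁻¹ * avgOn I (fun y => enorm2 (B *ᵥ f y)) ≤
        sSup ((fun v => enorm2 (B *ᵥ v)) '' cbAvg I f) ∧
    sSup ((fun v => enorm2 (B *ᵥ v)) '' cbAvg I f) ≤ avgOn I (fun y => enorm2 (B *ᵥ f y)) := by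
  set S := (fun v => enorm2 (B *ᵥ v)) '' cbAvg I f
  have hub : ∀ x ∈ S, x ≤ avgOn I (fun y => enorm2 (B *ᵥ f y)) := by
    rintro _ ⟨v, hv, rfl⟩
    exact enorm2_mulVec_le_avgOn_of_mem_cbAvg B hI hf hv
  have hcoord : ∀ i, avgOn I (fun y => |(B *ᵥ f y) i|) ≤ sSup S := fun i => by
    obtain ⟨v, hv, hle⟩ := exists_mem_cbAvg_avgOn_abs_le B hI hf i
    exact hle.trans (le_csSup ⟨_, hub⟩ (mem_image_of_mem _ hv))
  have hS : 0 ≤ sSup S := Real.sSup_nonneg (by rintro _ ⟨v, -, rfl⟩; exact Real.sqrt_nonneg _)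
  refine ⟨inv_mul_le_of_le_mul₀ d.cast_nonneg hS ?_,
    Real.sSup_le hub (avgOn_nonneg hI fun y _ => Real.sqrt_nonneg _)⟩
  calc avgOn I (fun y => enorm2 (B *ᵥ f y))
      ≤ ∑ i, avgOn I (fun y => |(B *ᵥ f y) i|) :=
        avgOn_enorm2_le_sum_avgOn_abs hI (B.integrableOn_mulVec hf)
    _ ≤ ∑ _i : Fin d, sSup S := Finset.sum_le_sum fun i _ => hcoord i
    _ = d * sSup S := by simp

end mulVec

theorem cbAvg_norm_comparable_general {d : ℕ} (A : Mat d)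
    (a b : ℝ) (f : ℝ → Fin d → ℝ) (hf : IntegrableOn f (Set.Ico a b)) :
    (d : ℝ)⁻¹ * avgOn (Set.Ico a b) (fun y => enorm2 (matSqrt A *ᵥ f y)) ≤
        sSup ((fun v => enorm2 (matSqrt A *ᵥ v)) '' cbAvg (Set.Ico a b) f) ∧
    sSup ((fun v => enorm2 (matSqrt A *ᵥ v)) '' cbAvg (Set.Ico a b) f) ≤
        avgOn (Set.Ico a b) (fun y => enorm2 (matSqrt A *ᵥ f y)) :=
  cbAvg_enorm2_mulVec_comparable (matSqrt A) measurableSet_Ico hf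

/-- For a positive semidefinite symmetric `A` and `ρ_A(x) = |A^{1/2}x|`, the norm of the
convex body average satisfies `d⁻¹ ⟨ρ_A(f)⟩_I ≤ ρ_A(⟪f⟫_I) ≤ ⟨ρ_A(f)⟩_I`. -/
theorem cbAvg_norm_comparable {d : ℕ} (A : Mat d) (hA : A.PosSemidef)
    (a b : ℝ) (hab : a < b) (f : ℝ → Fin d → ℝ) (hf : IntegrableOn f (Set.Ico a b)) :
    (d : ℝ)⁻¹ * avgOn (Set.Ico a b) (fun y => enorm2 (matSqrt A *ᵥ f y)) ≤
        sSup ((fun v => enorm2 (matSqrt A *ᵥ v)) '' cbAvg (Set.Ico a b) f) ∧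
    sSup ((fun v => enorm2 (matSqrt A *ᵥ v)) '' cbAvg (Set.Ico a b) f) ≤
        avgOn (Set.Ico a b) (fun y => enorm2 (matSqrt A *ᵥ f y)) :=
  cbAvg_norm_comparable_general A a b f hf
end
end

section
/- Fix n ≥ 0. For each I ∈ 𝒟₊^{≤n}, let S_I denote the leftmost dyadic interval of length 2^{-n-1} contained in I (the interval of length 2^{-n-1} reached from I by always passing to the left half). Then the intervals {S_I : I ∈ 𝒟₊^{≤n}} are pairwise disjoint; that is, if I, I' ∈ 𝒟₊^{≤n} with I ≠ I', then S_I ∩ S_{I'} = ∅. -/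
noncomputable section

theorem dyad_disjoint_of_lt {N a b : ℕ} (hab : a < b) : Disjoint (dyad N a) (dyad N b) := by
  have hab' : ((a : ℝ) + 1) / 2 ^ N ≤ (b : ℝ) / 2 ^ N := by
    gcongr
    exact_mod_cast hab
  exact Set.Ico_disjoint_Ico.mpr (min_le_of_left_le (le_max_of_le_right hab'))

theorem dyad_disjoint {N a b : ℕ} (hab : a ≠ b) : Disjoint (dyad N a) (dyad N b) :=
  hab.lt_or_gt.elim dyad_disjoint_of_lt fun h => (dyad_disjoint_of_lt h).symm

theorem padicValNat_two_odd_mul_two_pow {k : ℕ} (hk : Odd k) (i : ℕ) :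
    padicValNat 2 (k * 2 ^ i) = i := by
  rw [padicValNat.mul hk.pos.ne' (by positivity), padicValNat.prime_pow,
    padicValNat.eq_zero_of_not_dvd hk.not_two_dvd_nat, zero_add]

theorem eq_of_odd_mul_two_pow_eq {k k' i j : ℕ} (hk : Odd k) (hk' : Odd k')
    (h : k * 2 ^ i = k' * 2 ^ j) : i = j ∧ k = k' := by
  have hij : i = j := by
    rw [← padicValNat_two_odd_mul_two_pow hk i, h, padicValNat_two_odd_mul_two_pow hk' j]
  subst hij
  exact ⟨rfl, Nat.eq_of_mul_eq_mul_right (by positivity) h⟩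

/-- `dyad m k` with `k` odd is the right half `I₊` of `I = dyad (m - 1) (k / 2)`, and its leftmost
dyadic subinterval of length `2^{-(n+1)}` is `S_I = dyad (n + 1) (k * 2 ^ (n + 1 - m))`. Since `k` is
odd, the 2-adic valuation of `k * 2 ^ (n + 1 - m)` recovers `m`, and then `k`. -/
theorem leftmost_subintervals_disjoint_general (n : ℕ) (m k m' k' : ℕ)
    (hmn : m ≤ n) (hodd : k % 2 = 1)
    (hmn' : m' ≤ n) (hodd' : k' % 2 = 1)
    (hne : (m, k) ≠ (m', k')) :
    dyad (n + 1) (k * 2 ^ (n + 1 - m)) ∩ dyad (n + 1) (k' * 2 ^ (n + 1 - m')) = ∅ := by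
  refine Set.disjoint_iff_inter_eq_empty.mp (dyad_disjoint fun h => hne ?_)
  obtain ⟨hexp, rfl⟩ := eq_of_odd_mul_two_pow_eq (Nat.odd_iff.mpr hodd) (Nat.odd_iff.mpr hodd') h
  rw [show m = m' by omega]

/-- For `I = dyad m k ∈ 𝒟₊^{≤n}` (so `1 ≤ m ≤ n`, `k < 2^m`, `k` odd), the leftmost
dyadic interval of length `2^{-(n+1)}` contained in `I` is
`S_I = dyad (n+1) (k·2^{n+1-m})`. These intervals are pairwise disjoint. -/
theorem leftmost_subintervals_disjoint (n : ℕ) (m k m' k' : ℕ)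
    (hm1 : 1 ≤ m) (hmn : m ≤ n) (hk : k < 2 ^ m) (hodd : k % 2 = 1)
    (hm1' : 1 ≤ m') (hmn' : m' ≤ n) (hk' : k' < 2 ^ m') (hodd' : k' % 2 = 1)
    (hne : (m, k) ≠ (m', k')) :
    dyad (n + 1) (k * 2 ^ (n + 1 - m)) ∩ dyad (n + 1) (k' * 2 ^ (n + 1 - m')) = ∅ :=
  leftmost_subintervals_disjoint_general n m k m' k' hmn hodd hmn' hodd' hne
end
end
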